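/- For all integers n ≥ 1 and p > q ≥ 1 with p ≡ q (mod 2) and every level l ≥ 0, the n-dimensional Lebesgue measure of the level-l region Ωₗ equals ((pⁿ − qⁿ)/pⁿ)ˡ. (Equivalently, Ωₗ consists of (pⁿ − qⁿ)ˡ closed cubes of side p⁻ˡ overlapping only in measure-zero faces; this quantifies the space-overhead reduction of the fractal codes.) -/

import Mathlib

open Set

/-- The digit set `D` of the fractal cube construction: tuples `a ∈ {0,…,p−1}ⁿ` that do
not lie in the central block `{m,…,m+q−1}ⁿ`, where `m = (p−q)/2`. -/
def digitSet (n p q : ℕ) : Set (Fin n → ℕ) :=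
  {a | (∀ i, a i < p) ∧ ¬ ∀ i, (p - q) / 2 ≤ a i ∧ a i ≤ (p - q) / 2 + q - 1}

/-- The contracting similarity `x ↦ (x + a) / p` of `ℝⁿ`. -/
noncomputable def simMap (n p : ℕ) (a : Fin n → ℕ) (x : EuclideanSpace ℝ (Fin n)) :
    EuclideanSpace ℝ (Fin n) :=
  WithLp.toLp 2 (fun i => (x i + a i) / p)

/-- The level-`l` regions `Ωₗ` of the fractal cube construction:
`Ω₀ = [0,1]ⁿ` and `Ω_{l+1} = ⋃_{a ∈ D} p⁻¹ · (a + Ωₗ)`. -/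
noncomputable def levelRegion (n p q : ℕ) : ℕ → Set (EuclideanSpace ℝ (Fin n))
  | 0 => {x | ∀ i, x i ∈ Icc (0 : ℝ) 1}
  | l + 1 => ⋃ a ∈ digitSet n p q, simMap n p a '' levelRegion n p q l

/-- The fractal cube `FC⁽ⁿ⁾(p,q) = ⋂_l Ωₗ`. -/
noncomputable def fractalCube (n p q : ℕ) : Set (EuclideanSpace ℝ (Fin n)) :=
  ⋂ l, levelRegion n p q l

open MeasureTheory

/-! `Ω_{l+1}` is the union of the `pⁿ − qⁿ` images of `Ωₗ` under the similarities
`x ↦ (x + a) / p`, each of which scales volume by `p⁻ⁿ`. As `Ωₗ ⊆ [0,1]ⁿ`, the image for the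
digit `a` lies in the cube `(a + [0,1]ⁿ) / p`, and two distinct such cubes meet inside a
coordinate hyperplane, a null set. Hence the volume of the union is the sum of the volumes,
`vol Ω_{l+1} = (pⁿ − qⁿ) p⁻ⁿ vol Ωₗ`, and the formula follows by induction from `vol Ω₀ = 1`. -/

section EuclideanSpace

variable {n : ℕ}

lemma volume_preimage_ofLp (s : Set (Fin n → ℝ)) :
    volume (WithLp.ofLp ⁻¹' s : Set (EuclideanSpace ℝ (Fin n))) = volume s :=
  (EuclideanSpace.volume_preserving_symm_measurableEquiv_toLp (Fin n)).measure_preimage_equiv s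

lemma volume_setOf_apply_eq (i : Fin n) (c : ℝ) :
    volume {x : EuclideanSpace ℝ (Fin n) | x i = c} = 0 := by
  change volume (WithLp.ofLp ⁻¹' {y : Fin n → ℝ | y i = c}) = 0
  rw [volume_preimage_ofLp, volume_pi]
  exact Measure.pi_hyperplane (fun _ : Fin n => (volume : Measure ℝ)) i c

lemma volume_setOf_forall_mem_Icc (a b : Fin n → ℝ) :
    volume {x : EuclideanSpace ℝ (Fin n) | ∀ i, x i ∈ Icc (a i) (b i)} =
      ∏ i, ENNReal.ofReal (b i - a i) := by
  have hbox : {x : EuclideanSpace ℝ (Fin n) | ∀ i, x i ∈ Icc (a i) (b i)} =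
      WithLp.ofLp ⁻¹' univ.pi fun i => Icc (a i) (b i) := by
    ext x
    simp only [mem_preimage, mem_univ_pi]
    rfl
  rw [hbox, volume_preimage_ofLp, volume_pi_pi]
  simp only [Real.volume_Icc]

end EuclideanSpace

section simMap

variable {n p : ℕ}

lemma simMap_eq_vadd_smul (a : Fin n → ℕ) :
    simMap n p a = fun x => WithLp.toLp 2 (fun i => (a i : ℝ) / p) +ᵥ (p : ℝ)⁻¹ • x := by
  ext x i
  change (x i + a i) / p = (a i : ℝ) / p + (p : ℝ)⁻¹ * x i
  rw [inv_mul_eq_div, ← add_div, add_comm]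

lemma continuous_simMap (a : Fin n → ℕ) : Continuous (simMap n p a) := by
  rw [simMap_eq_vadd_smul]
  fun_prop

lemma volume_simMap_image (a : Fin n → ℕ) (s : Set (EuclideanSpace ℝ (Fin n))) :
    volume (simMap n p a '' s) = ENNReal.ofReal ((p : ℝ)⁻¹ ^ n) * volume s := by
  rw [simMap_eq_vadd_smul, ← image_image (fun y => _ +ᵥ y) (fun x => (p : ℝ)⁻¹ • x),
    image_vadd, image_smul, measure_vadd, Measure.addHaar_smul, finrank_euclideanSpace_fin,
    inv_pow, abs_of_nonneg (by positivity)]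

end simMap

def digitFinset (n p q : ℕ) : Finset (Fin n → ℕ) :=
  Fintype.piFinset (fun _ => Finset.range p) \
    Fintype.piFinset (fun _ => Finset.Icc ((p - q) / 2) ((p - q) / 2 + q - 1))

lemma coe_digitFinset (n p q : ℕ) : (digitFinset n p q : Set (Fin n → ℕ)) = digitSet n p q := by
  ext a
  simp only [digitFinset, digitSet, Finset.coe_sdiff, Fintype.coe_piFinset, Finset.coe_range,
    Finset.coe_Icc, mem_sdiff, mem_univ_pi, mem_Iio, mem_Icc, mem_ofPred_eq]

lemma card_digitFinset {n p q : ℕ} (hq : 1 ≤ q) (hqp : q ≤ p) :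
    (digitFinset n p q).card = p ^ n - q ^ n := by
  have hblock : Finset.Icc ((p - q) / 2) ((p - q) / 2 + q - 1) ⊆ Finset.range p := by
    intro k hk
    simp only [Finset.mem_Icc, Finset.mem_range] at hk ⊢
    omega
  rw [digitFinset, Finset.card_sdiff_of_subset (Fintype.piFinset_subset _ _ fun _ => hblock),
    Fintype.card_piFinset, Fintype.card_piFinset]
  simp only [Finset.card_range, Nat.card_Icc, Finset.prod_const, Finset.card_univ,
    Fintype.card_fin]
  congr 2
  omega

def digitCube (n p : ℕ) (a : Fin n → ℕ) : Set (EuclideanSpace ℝ (Fin n)) :=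
  {x | ∀ i, x i ∈ Icc ((a i : ℝ) / p) ((a i + 1) / p)}

section levelRegion

variable {n p q : ℕ}

lemma mapsTo_simMap_digitCube (a : Fin n → ℕ) :
    MapsTo (simMap n p a) (levelRegion n p q 0) (digitCube n p a) := by
  intro y hy i
  change (y i + a i) / p ∈ Icc _ _
  exact ⟨div_le_div_of_nonneg_right (by linarith [(hy i).1]) p.cast_nonneg,
    div_le_div_of_nonneg_right (by linarith [(hy i).2]) p.cast_nonneg⟩

lemma digitCube_subset_levelRegion_zero {a : Fin n → ℕ} (ha : ∀ i, a i < p) :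
    digitCube n p a ⊆ levelRegion n p q 0 := by
  intro x hx i
  have hai : (a i : ℝ) + 1 ≤ p := by exact_mod_cast ha i
  exact ⟨(by positivity : (0 : ℝ) ≤ a i / p).trans (hx i).1,
    (hx i).2.trans (div_le_one_of_le₀ hai p.cast_nonneg)⟩

lemma levelRegion_subset_levelRegion_zero (l : ℕ) :
    levelRegion n p q l ⊆ levelRegion n p q 0 := by
  induction l with
  | zero => exact subset_rfl
  | succ l ih =>
    exact iUnion₂_subset fun a ha => ((image_mono ih).trans
      (mapsTo_simMap_digitCube a).image_subset).trans (digitCube_subset_levelRegion_zero ha.1)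

lemma simMap_image_levelRegion_subset_digitCube (a : Fin n → ℕ) (l : ℕ) :
    simMap n p a '' levelRegion n p q l ⊆ digitCube n p a :=
  (image_mono (levelRegion_subset_levelRegion_zero l)).trans
    (mapsTo_simMap_digitCube a).image_subset

lemma aedisjoint_digitCube {a b : Fin n → ℕ} (hab : a ≠ b) :
    AEDisjoint volume (digitCube n p a) (digitCube n p b) := by
  obtain ⟨i, hi⟩ := Function.ne_iff.mp hab
  wlog h : a i < b i generalizing a b
  · exact (this hab.symm hi.symm (hi.lt_or_gt.resolve_left h)).symm
  refine measure_mono_null (fun x hx => ?_) (volume_setOf_apply_eq i ((b i : ℝ) / p))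
  have hab' : (a i : ℝ) + 1 ≤ b i := by exact_mod_cast h
  exact le_antisymm ((hx.1 i).2.trans (by gcongr)) (hx.2 i).1

lemma isCompact_levelRegion (l : ℕ) : IsCompact (levelRegion n p q l) := by
  induction l with
  | zero =>
    have hcube : levelRegion n p q 0 = (EuclideanSpace.equiv (Fin n) ℝ).toHomeomorph ⁻¹'
        univ.pi fun _ => Icc 0 1 := by
      ext x
      simp only [mem_preimage, mem_univ_pi]
      rfl
    rw [hcube, Homeomorph.isCompact_preimage]
    exact isCompact_univ_pi fun _ => isCompact_Icc
  | succ l ih =>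
    exact ((coe_digitFinset n p q) ▸ (digitFinset n p q).finite_toSet).isCompact_biUnion
      fun a _ => ih.image (continuous_simMap a)

lemma volume_levelRegion_zero : volume (levelRegion n p q 0) = 1 := by
  have hcube := volume_setOf_forall_mem_Icc (fun _ : Fin n => (0 : ℝ)) fun _ => 1
  simp only [sub_zero, ENNReal.ofReal_one, Finset.prod_const_one] at hcube
  exact hcube

lemma volume_levelRegion_succ (l : ℕ) :
    volume (levelRegion n p q (l + 1)) =
      (digitFinset n p q).card * ENNReal.ofReal ((p : ℝ)⁻¹ ^ n) * volume (levelRegion n p q l) := by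
  have hunion : levelRegion n p q (l + 1) =
      ⋃ a ∈ digitFinset n p q, simMap n p a '' levelRegion n p q l := by
    simp only [levelRegion, ← coe_digitFinset, Finset.set_biUnion_coe]
  rw [hunion, measure_biUnion_finset₀]
  · simp only [volume_simMap_image, Finset.sum_const, nsmul_eq_mul, mul_assoc]
  · intro a _ b _ hab
    exact (aedisjoint_digitCube hab).mono (simMap_image_levelRegion_subset_digitCube a l)
      (simMap_image_levelRegion_subset_digitCube b l)
  · exact fun a _ => ((isCompact_levelRegion l).image
      (continuous_simMap a)).isClosed.measurableSet.nullMeasurableSet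

end levelRegion

theorem volume_levelRegion_general (n p q : ℕ) (hq : 1 ≤ q) (hpq : q < p) (l : ℕ) :
    volume (levelRegion n p q l) =
      ENNReal.ofReal ((((p : ℝ) ^ n - (q : ℝ) ^ n) / (p : ℝ) ^ n) ^ l) := by
  have hqp : (q : ℝ) ^ n ≤ (p : ℝ) ^ n := by gcongr
  have hratio : ((digitFinset n p q).card : ENNReal) * ENNReal.ofReal ((p : ℝ)⁻¹ ^ n) =
      ENNReal.ofReal (((p : ℝ) ^ n - (q : ℝ) ^ n) / (p : ℝ) ^ n) := by
    rw [card_digitFinset hq hpq.le, ← ENNReal.ofReal_natCast, ← ENNReal.ofReal_mul (by positivity),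
      Nat.cast_sub (Nat.pow_le_pow_left hpq.le n)]
    push_cast
    ring_nf
  rw [ENNReal.ofReal_pow (div_nonneg (sub_nonneg.2 hqp) (by positivity)), ← hratio]
  induction l with
  | zero => rw [pow_zero, volume_levelRegion_zero]
  | succ l ih => rw [volume_levelRegion_succ, ih, pow_succ']

/-- For all integers `n ≥ 1` and `p > q ≥ 1` with `p ≡ q (mod 2)` and
every level `l ≥ 0`, the `n`-dimensional Lebesgue measure of the level-`l` region `Ωₗ`
equals `((pⁿ − qⁿ)/pⁿ)ˡ`. -/
theorem volume_levelRegion (n p q : ℕ) (hn : 1 ≤ n) (hq : 1 ≤ q) (hpq : q < p)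
    (hmod : p % 2 = q % 2) (l : ℕ) :
    volume (levelRegion n p q l) =
      ENNReal.ofReal ((((p : ℝ) ^ n - (q : ℝ) ^ n) / (p : ℝ) ^ n) ^ l) :=
  volume_levelRegion_general n p q hq hpq l
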